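/- arXiv:2605.24974 — 2 statements merged into one kernel-verified Lean document; each statement's English description precedes it below -/
import Mathlib

section
/- The normalized second moment of the hexagonal lattice A₂ equals 5/(36√3). -/
open MeasureTheory Real

/-- The hexagonal lattice `A₂`, generated by `v₁ = (1,0)` and `v₂ = (1/2, √3/2)`. -/
def hexLattice : Set (EuclideanSpace ℝ (Fin 2)) :=
  {x | ∃ k₁ k₂ : ℤ, x 0 = (k₁ : ℝ) + (k₂ : ℝ) / 2 ∧ x 1 = (k₂ : ℝ) * (Real.sqrt 3 / 2)}

/-- The Voronoi cell of the origin of a point set `Λ`. -/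
def voronoiCell (Λ : Set (EuclideanSpace ℝ (Fin 2))) : Set (EuclideanSpace ℝ (Fin 2)) :=
  {x | ∀ p ∈ Λ, ‖x‖ ≤ ‖x - p‖}

/-!
A point `x` lies in the Voronoi cell of `Λ` iff `2⟪x, p⟫ ≤ ‖p‖²` for all `p ∈ Λ`. For
`p = k₁v₁ + k₂v₂` this reads `2(k₁a + k₂b) ≤ k₁² + k₁k₂ + k₂²` with `a = ⟪x, v₁⟫`, `b = ⟪x, v₂⟫`.
For integers `k₁² + k₁k₂ + k₂²` dominates `|k₁|`, `|k₂|` and `|k₁ + k₂|`, so only the six minimal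
vectors `±v₁, ±v₂, ±(v₁ - v₂)` matter and the cell is the hexagon `|x| ≤ 1/2, |y| ≤ (1 - |x|)/√3`.
Fubini and the symmetry `x ↦ -x` reduce its area `√3/2` and second moment `5/(24√3)` to integrals
of cubic polynomials over `[0, 1/2]`.
-/

open Set

lemma abs_le_sq_add_mul_add_sq (m n : ℤ) : |m| ≤ m ^ 2 + m * n + n ^ 2 := by
  rcases eq_or_ne m 0 with rfl | hm
  · simp [sq_nonneg]
  · have := Int.one_le_abs hm
    nlinarith [sq_abs m, sq_nonneg (m + 2 * n), abs_nonneg m]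

lemma two_mul_add_le_of_abs_le {k₁ k₂ a b M : ℝ} (h₁ : |k₁| ≤ M) (h₂ : |k₂| ≤ M)
    (h₁₂ : |k₁ + k₂| ≤ M) (ha : |a| ≤ 1 / 2) (hb : |b| ≤ 1 / 2) (hab : |a - b| ≤ 1 / 2) :
    2 * (k₁ * a + k₂ * b) ≤ M := by
  rw [abs_le] at *
  rcases le_total 0 k₁ with hk₁ | hk₁ <;> rcases le_total 0 k₂ with hk₂ | hk₂ <;>
    rcases le_total 0 (k₁ + k₂) with hk | hk <;> nlinarith

lemma forall_two_mul_le_sq_add_mul_add_sq_iff (a b : ℝ) :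
    (∀ k₁ k₂ : ℤ, 2 * (k₁ * a + k₂ * b) ≤ (k₁ : ℝ) ^ 2 + k₁ * k₂ + k₂ ^ 2) ↔
      |a| ≤ 1 / 2 ∧ |b| ≤ 1 / 2 ∧ |a - b| ≤ 1 / 2 := by
  refine ⟨fun h => ?_, fun ⟨ha, hb, hab⟩ k₁ k₂ => ?_⟩
  · have := h 1 0; have := h (-1) 0; have := h 0 1; have := h 0 (-1)
    have := h 1 (-1); have := h (-1) 1
    norm_num at *
    refine ⟨abs_le.2 ⟨?_, ?_⟩, abs_le.2 ⟨?_, ?_⟩, abs_le.2 ⟨?_, ?_⟩⟩ <;> linarith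
  · have h₁ := abs_le_sq_add_mul_add_sq k₁ k₂
    have h₂ := abs_le_sq_add_mul_add_sq k₂ k₁
    have h₁₂ := abs_le_sq_add_mul_add_sq (k₁ + k₂) (-k₂)
    refine two_mul_add_le_of_abs_le ?_ ?_ ?_ ha hb hab
    · exact_mod_cast h₁
    · exact_mod_cast h₂.trans_eq (by ring)
    · exact_mod_cast h₁₂.trans_eq (by ring)

lemma mem_voronoiCell_iff {Λ : Set (EuclideanSpace ℝ (Fin 2))} {x : EuclideanSpace ℝ (Fin 2)} :
    x ∈ voronoiCell Λ ↔ ∀ p ∈ Λ, 2 * inner ℝ x p ≤ ‖p‖ ^ 2 := by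
  refine forall₂_congr fun p _ => ?_
  rw [← sq_le_sq₀ (norm_nonneg _) (norm_nonneg _), norm_sub_sq_real]
  constructor <;> intro h <;> linarith

lemma hexLattice_eq_range :
    hexLattice = range fun k : ℤ × ℤ => !₂[(k.1 : ℝ) + k.2 / 2, k.2 * (√3 / 2)] := by
  ext p
  constructor
  · rintro ⟨k₁, k₂, h₀, h₁⟩
    exact ⟨(k₁, k₂), by ext i; fin_cases i <;> simp [h₀, h₁]⟩
  · rintro ⟨⟨k₁, k₂⟩, rfl⟩
    exact ⟨k₁, k₂, by simp, by simp⟩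

lemma mem_voronoiCell_hexLattice_iff (x : EuclideanSpace ℝ (Fin 2)) :
    x ∈ voronoiCell hexLattice ↔
      |x 0| ≤ 1 / 2 ∧ |x 0 / 2 + x 1 * (√3 / 2)| ≤ 1 / 2 ∧ |x 0 / 2 - x 1 * (√3 / 2)| ≤ 1 / 2 := by
  have h3 : √3 ^ 2 = 3 := sq_sqrt (by norm_num)
  rw [mem_voronoiCell_iff, hexLattice_eq_range, forall_mem_range, Prod.forall,
    show x 0 / 2 - x 1 * (√3 / 2) = x 0 - (x 0 / 2 + x 1 * (√3 / 2)) by ring,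
    ← forall_two_mul_le_sq_add_mul_add_sq_iff]
  refine forall₂_congr fun k₁ k₂ => ?_
  have h_inner : inner ℝ x !₂[(k₁ : ℝ) + k₂ / 2, k₂ * (√3 / 2)] =
      k₁ * x 0 + k₂ * (x 0 / 2 + x 1 * (√3 / 2)) := by
    simp only [PiLp.inner_apply, RCLike.inner_apply, ringHom_apply, Fin.sum_univ_two, Fin.isValue,
      Matrix.cons_val_zero, Matrix.cons_val_one, Matrix.cons_val_fin_one]
    ring
  have h_norm : ‖!₂[(k₁ : ℝ) + k₂ / 2, k₂ * (√3 / 2)]‖ ^ 2 = (k₁ : ℝ) ^ 2 + k₁ * k₂ + k₂ ^ 2 := by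
    simp only [EuclideanSpace.norm_sq_eq, norm_eq_abs, sq_abs, Fin.sum_univ_two, Fin.isValue,
      Matrix.cons_val_zero, Matrix.cons_val_one, Matrix.cons_val_fin_one, mul_pow, div_pow, h3]
    ring
  rw [h_inner, h_norm]

noncomputable def hexHalfHeight (x : ℝ) : ℝ := (1 - |x|) / √3

def hexagon : Set (ℝ × ℝ) :=
  {p | p.1 ∈ Icc (-(1 / 2)) (1 / 2) ∧ p.2 ∈ Icc (-hexHalfHeight p.1) (hexHalfHeight p.1)}

lemma continuous_hexHalfHeight : Continuous hexHalfHeight := by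
  unfold hexHalfHeight; fun_prop

lemma hexHalfHeight_neg (x : ℝ) : hexHalfHeight (-x) = hexHalfHeight x := by
  simp [hexHalfHeight]

lemma hexHalfHeight_of_nonneg {x : ℝ} (hx : 0 ≤ x) : hexHalfHeight x = (1 - x) / √3 := by
  rw [hexHalfHeight, abs_of_nonneg hx]

lemma hexHalfHeight_nonneg {x : ℝ} (hx : |x| ≤ 1) : 0 ≤ hexHalfHeight x :=
  div_nonneg (by linarith) (sqrt_nonneg 3)

lemma mem_hexagon_iff (a y : ℝ) : (a, y) ∈ hexagon ↔
    |a| ≤ 1 / 2 ∧ |a / 2 + y * (√3 / 2)| ≤ 1 / 2 ∧ |a / 2 - y * (√3 / 2)| ≤ 1 / 2 := by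
  have hs : 0 < √3 := sqrt_pos.2 (by norm_num)
  simp only [hexagon, mem_ofPred_eq, mem_Icc, ← abs_le]
  refine and_congr_right fun _ => ?_
  rw [hexHalfHeight, le_div_iff₀ hs, abs_le, abs_le]
  rcases abs_cases a with ⟨ha, _⟩ | ⟨ha, _⟩ <;> rcases abs_cases y with ⟨hy, _⟩ | ⟨hy, _⟩ <;>
    rw [ha, hy] <;> constructor <;> intro h <;> (try constructor) <;> (try constructor) <;> nlinarith

lemma hexagon_subset : hexagon ⊆ Icc (-(1 / 2)) (1 / 2) ×ˢ Icc (-1) 1 := by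
  rintro ⟨a, y⟩ ⟨ha, hy⟩
  have h_le : hexHalfHeight a ≤ 1 := by
    have : 1 ≤ √3 := one_le_sqrt.2 (by norm_num)
    rw [hexHalfHeight, div_le_one (by linarith)]
    linarith [abs_nonneg a]
  exact ⟨ha, by linarith [hy.1], hy.2.trans h_le⟩

noncomputable def euclideanFinTwoEquivProd : EuclideanSpace ℝ (Fin 2) ≃ᵐ ℝ × ℝ :=
  (MeasurableEquiv.toLp 2 (Fin 2 → ℝ)).symm.trans MeasurableEquiv.finTwoArrow

lemma euclideanFinTwoEquivProd_apply (x : EuclideanSpace ℝ (Fin 2)) :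
    euclideanFinTwoEquivProd x = (x 0, x 1) := rfl

lemma measurePreserving_euclideanFinTwoEquivProd :
    MeasurePreserving euclideanFinTwoEquivProd :=
  (volume_preserving_finTwoArrow ℝ).comp
    (EuclideanSpace.volume_preserving_symm_measurableEquiv_toLp (Fin 2))

lemma voronoiCell_hexLattice_eq_preimage :
    voronoiCell hexLattice = euclideanFinTwoEquivProd ⁻¹' hexagon := by
  ext x
  rw [mem_preimage, euclideanFinTwoEquivProd_apply, mem_hexagon_iff,
    mem_voronoiCell_hexLattice_iff]

lemma setIntegral_voronoiCell_hexLattice (g : ℝ × ℝ → ℝ) :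
    ∫ x in voronoiCell hexLattice, g (x 0, x 1) = ∫ p in hexagon, g p := by
  rw [voronoiCell_hexLattice_eq_preimage]
  exact measurePreserving_euclideanFinTwoEquivProd.setIntegral_preimage_emb
    euclideanFinTwoEquivProd.measurableEmbedding g hexagon

lemma setIntegral_region_between_cc {α : Type*} [MeasurableSpace α] {μ : Measure α} [SFinite μ]
    {s : Set α} {g h : α → ℝ} {f : α × ℝ → ℝ} (hs : MeasurableSet s) (hg : Measurable g)
    (hh : Measurable h)
    (hf : IntegrableOn f {p | p.1 ∈ s ∧ p.2 ∈ Icc (g p.1) (h p.1)} (μ.prod volume)) :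
    ∫ p in {p | p.1 ∈ s ∧ p.2 ∈ Icc (g p.1) (h p.1)}, f p ∂μ.prod volume =
      ∫ x in s, (∫ y in Icc (g x) (h x), f (x, y)) ∂μ := by
  have hR := measurableSet_region_between_cc hg hh hs
  rw [← integral_indicator hR, integral_prod _ ((integrable_indicator_iff hR).2 hf),
    ← integral_indicator hs]
  congr 1 with x
  by_cases hx : x ∈ s
  · simp only [indicator_of_mem hx, ← integral_indicator measurableSet_Icc]
    congr 1 with y
    simp only [indicator, mem_ofPred_eq, hx, true_and]
  · simp [hx]

lemma setIntegral_Icc_of_even {f : ℝ → ℝ} (hf : ∀ x, f (-x) = f x) {c : ℝ} (hc : 0 ≤ c) :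
    ∫ x in Icc (-c) c, f x = 2 * ∫ x in 0..c, f x := by
  have hfabs : ∀ x, f |x| = f x := fun x => by
    rcases abs_choice x with h | h <;> rw [h]; exact hf x
  have : (Icc (-c) c).indicator f = fun x => (Iic c).indicator f |x| := by
    ext x
    simp only [indicator_apply, mem_Icc, mem_Iic, ← abs_le, hfabs]
  rw [← integral_indicator measurableSet_Icc, this, integral_comp_abs,
    integral_indicator measurableSet_Iic, Measure.restrict_restrict measurableSet_Iic,
    Iic_inter_Ioi, intervalIntegral.integral_of_le hc]

lemma integral_cubic (a b c₀ c₁ c₂ c₃ : ℝ) :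
    ∫ x in a..b, (c₀ + c₁ * x + c₂ * x ^ 2 + c₃ * x ^ 3) =
      c₀ * (b - a) + c₁ * (b ^ 2 - a ^ 2) / 2 + c₂ * (b ^ 3 - a ^ 3) / 3 + c₃ * (b ^ 4 - a ^ 4) / 4 := by
  rw [intervalIntegral.integral_eq_sub_of_hasDerivAt
    (f := fun x => c₀ * x + c₁ * x ^ 2 / 2 + c₂ * x ^ 3 / 3 + c₃ * x ^ 4 / 4)
    (fun x _ => ?_) ((by fun_prop : Continuous _).intervalIntegrable a b)]
  · ring
  · exact (((((hasDerivAt_id x).const_mul c₀).add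
      (((hasDerivAt_pow 2 x).const_mul c₁).div_const 2)).add
      (((hasDerivAt_pow 3 x).const_mul c₂).div_const 3)).add
      (((hasDerivAt_pow 4 x).const_mul c₃).div_const 4)).congr_deriv
      (by simp only [mul_one, Nat.cast_ofNat, Nat.add_one_sub_one, pow_one]; ring)

lemma setIntegral_Icc_neg_add_sq {c : ℝ} (hc : 0 ≤ c) (s : ℝ) :
    ∫ y in Icc (-c) c, (s + y ^ 2) = 2 * c * s + 2 * c ^ 3 / 3 := by
  rw [integral_Icc_eq_integral_Ioc, ← intervalIntegral.integral_of_le (by linarith),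
    intervalIntegral.integral_add intervalIntegrable_const (intervalIntegral.intervalIntegrable_pow 2)]
  simp only [intervalIntegral.integral_const, sub_neg_eq_add, smul_eq_mul, integral_pow,
    Nat.reduceAdd, Nat.cast_ofNat]
  ring

lemma setIntegral_hexagon {f : ℝ × ℝ → ℝ} (hf : Continuous f) :
    ∫ p in hexagon, f p =
      ∫ x in Icc (-(1 / 2)) (1 / 2), ∫ y in Icc (-hexHalfHeight x) (hexHalfHeight x), f (x, y) := by
  have hint : IntegrableOn f hexagon :=
    (hf.continuousOn.integrableOn_compact (isCompact_Icc.prod isCompact_Icc)).mono_set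
      hexagon_subset
  rw [Measure.volume_eq_prod] at hint ⊢
  exact setIntegral_region_between_cc measurableSet_Icc continuous_hexHalfHeight.measurable.neg
    continuous_hexHalfHeight.measurable hint

lemma integral_hexagon_one : ∫ _ in hexagon, (1 : ℝ) = √3 / 2 := by
  have h3 : √3 ^ 2 = 3 := sq_sqrt (by norm_num)
  have h_inner : ∀ x ∈ Icc (-(1 / 2) : ℝ) (1 / 2),
      ∫ _ in Icc (-hexHalfHeight x) (hexHalfHeight x), (1 : ℝ) = 2 * hexHalfHeight x := by
    intro x hx
    have := hexHalfHeight_nonneg (x := x) (abs_le.2 ⟨by linarith [hx.1], by linarith [hx.2]⟩)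
    rw [setIntegral_const, volume_real_Icc_of_le (by linarith), smul_eq_mul, mul_one]
    ring
  have h_outer : ∀ x ∈ uIcc (0 : ℝ) (1 / 2),
      2 * hexHalfHeight x = 2 / √3 + (-2 / √3) * x + 0 * x ^ 2 + 0 * x ^ 3 := by
    intro x hx
    rw [hexHalfHeight_of_nonneg (by simpa using hx.1)]
    ring
  rw [setIntegral_hexagon continuous_const, setIntegral_congr_fun measurableSet_Icc h_inner,
    setIntegral_Icc_of_even (fun x => by rw [hexHalfHeight_neg]) (by norm_num),
    intervalIntegral.integral_congr h_outer, integral_cubic]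
  field_simp
  rw [h3]
  ring

lemma integral_hexagon_norm_sq : ∫ p in hexagon, (p.1 ^ 2 + p.2 ^ 2) = 5 / (24 * √3) := by
  have h3 : √3 ^ 2 = 3 := sq_sqrt (by norm_num)
  have h_inner : ∀ x ∈ Icc (-(1 / 2) : ℝ) (1 / 2),
      ∫ y in Icc (-hexHalfHeight x) (hexHalfHeight x), (x ^ 2 + y ^ 2) =
        2 * hexHalfHeight x * x ^ 2 + 2 * hexHalfHeight x ^ 3 / 3 := fun x hx =>
    setIntegral_Icc_neg_add_sq
      (hexHalfHeight_nonneg (abs_le.2 ⟨by linarith [hx.1], by linarith [hx.2]⟩)) _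
  have h_outer : ∀ x ∈ uIcc (0 : ℝ) (1 / 2),
      2 * hexHalfHeight x * x ^ 2 + 2 * hexHalfHeight x ^ 3 / 3 =
        2 / (9 * √3) + (-2 / (3 * √3)) * x + 8 / (3 * √3) * x ^ 2 + (-20 / (9 * √3)) * x ^ 3 := by
    intro x hx
    rw [hexHalfHeight_of_nonneg (by simpa using hx.1)]
    field_simp
    ring_nf
    rw [h3]
    ring
  rw [setIntegral_hexagon (by fun_prop), setIntegral_congr_fun measurableSet_Icc h_inner,
    setIntegral_Icc_of_even (fun x => by rw [hexHalfHeight_neg, neg_sq]) (by norm_num),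
    intervalIntegral.integral_congr h_outer, integral_cubic]
  field_simp
  ring

/-- The normalized second moment of the hexagonal lattice `A₂` equals `5/(36√3)`. -/
theorem normalized_second_moment_hexagonal :
    (1 / (2 * (volume (voronoiCell hexLattice)).toReal ^ 2)) *
      (∫ r in voronoiCell hexLattice, ‖r‖ ^ 2) = 5 / (36 * Real.sqrt 3) := by
  have h_area : (volume (voronoiCell hexLattice)).toReal = √3 / 2 := by
    rw [← integral_hexagon_one, ← setIntegral_voronoiCell_hexLattice fun _ => 1, setIntegral_const,
      smul_eq_mul, mul_one, measureReal_def]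
  have h_moment : ∫ r in voronoiCell hexLattice, ‖r‖ ^ 2 = 5 / (24 * √3) := by
    simp_rw [EuclideanSpace.norm_sq_eq, Fin.sum_univ_two, Real.norm_eq_abs, sq_abs]
    exact (setIntegral_voronoiCell_hexLattice fun p => p.1 ^ 2 + p.2 ^ 2).trans
      integral_hexagon_norm_sq
  rw [h_area, h_moment, div_pow, sq_sqrt (by norm_num : (0 : ℝ) ≤ 3)]
  field_simp
  ring
end

section
/- Correctness of the D_n nearest-point rule for generic points: let x ∈ ℝⁿ have no coordinate at half-integer ties. Then the nearest point of D_n to x (in Euclidean distance) is whichever of f(x) and g(x) has even coordinate sum, where f(x) is componentwise nearest-integer rounding and g(x) flips the rounding of the coordinate furthest from an integer. -/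
/-!
If `Σ round xᵢ` is even, rounding each coordinate is optimal coordinatewise. Otherwise every
`z ∈ D_n` differs from the rounding in some coordinate `j`, which costs at least
`1 - 2|xⱼ - round xⱼ| ≥ 1 - 2|x_{i*} - round x_{i*}|` over the rounding; flipping the rounding
of `x_{i*}` costs exactly this amount and fixes the parity.
-/

open Finset

noncomputable def flipRound (y : ℝ) : ℤ := if (round y : ℝ) ≤ y then round y + 1 else round y - 1

lemma odd_flipRound_sub_round (y : ℝ) : Odd (flipRound y - round y) := by
  unfold flipRound
  split_ifs <;> simp

lemma sq_sub_flipRound (y : ℝ) :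
    (y - flipRound y) ^ 2 = (y - round y) ^ 2 + (1 - 2 * |y - round y|) := by
  unfold flipRound
  split_ifs with h
  · rw [abs_of_nonneg (sub_nonneg.mpr h)]
    push_cast
    ring
  · rw [abs_of_neg (sub_neg.mpr (not_le.mp h))]
    push_cast
    ring

lemma sq_sub_round_le (y : ℝ) (z : ℤ) : (y - round y) ^ 2 ≤ (y - z) ^ 2 :=
  sq_le_sq.mpr (round_le y z)

lemma sq_sub_round_add_le_of_ne {y : ℝ} {z : ℤ} (hz : z ≠ round y) :
    (y - round y) ^ 2 + (1 - 2 * |y - round y|) ≤ (y - z) ^ 2 := by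
  have h_gap : (1 : ℝ) ≤ |(z : ℝ) - round y| := by
    exact_mod_cast Int.one_le_abs (sub_ne_zero.mpr hz)
  have h_far : 1 - |y - round y| ≤ |y - z| := by
    linarith [abs_sub_le (z : ℝ) y (round y), abs_sub_comm (z : ℝ) y]
  have h_half : |y - round y| ≤ 1 / 2 := abs_sub_round y
  calc (y - round y) ^ 2 + (1 - 2 * |y - round y|) = (1 - |y - round y|) ^ 2 := by
        rw [← sq_abs (y - round y)]; ring
    _ ≤ |y - z| ^ 2 := pow_le_pow_left₀ (by linarith) h_far 2
    _ = (y - z) ^ 2 := sq_abs _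

lemma sum_sub_sum_eq_of_eq_of_ne {ι M : Type*} [Fintype ι] [AddCommGroup M] {f g : ι → M} {a : ι}
    (h : ∀ i, i ≠ a → f i = g i) : ∑ i, f i - ∑ i, g i = f a - g a := by
  rw [← sum_sub_distrib, sum_eq_single a (fun i _ hi => by rw [h i hi, sub_self]) (by simp)]

section Rounding

variable {ι : Type*} [Fintype ι] (x : ι → ℝ)

lemma sum_sq_sub_round_le (z : ι → ℤ) :
    ∑ i, (x i - round (x i)) ^ 2 ≤ ∑ i, (x i - z i) ^ 2 :=
  sum_le_sum fun i _ => sq_sub_round_le (x i) (z i)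

lemma sum_sq_sub_round_add_le_of_ne {b : ℝ} (hb : ∀ i, |x i - round (x i)| ≤ b) {z : ι → ℤ}
    (hz : z ≠ fun i => round (x i)) :
    ∑ i, (x i - round (x i)) ^ 2 + (1 - 2 * b) ≤ ∑ i, (x i - z i) ^ 2 := by
  obtain ⟨j, hj⟩ : ∃ j, z j ≠ round (x j) := Function.ne_iff.mp hz
  have h_excess : (x j - z j) ^ 2 - (x j - round (x j)) ^ 2
      ≤ ∑ i, ((x i - z i) ^ 2 - (x i - round (x i)) ^ 2) :=
    single_le_sum (f := fun i => (x i - z i) ^ 2 - (x i - round (x i)) ^ 2)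
      (fun i _ => sub_nonneg.mpr (sq_sub_round_le (x i) (z i))) (mem_univ j)
  rw [sum_sub_distrib] at h_excess
  linarith [sq_sub_round_add_le_of_ne hj, hb j]

end Rounding

theorem dn_nearest_point_rule_general {n : ℕ} (x : Fin n → ℝ) (istar : Fin n)
    (hmax : ∀ i, i ≠ istar → |x i - round (x i)| < |x istar - round (x istar)|)
    (g : Fin n → ℤ)
    (hg : ∀ i, i ≠ istar → g i = round (x i))
    (hgstar : g istar =
      if (round (x istar) : ℝ) ≤ x istar then round (x istar) + 1 else round (x istar) - 1)
    (w : Fin n → ℤ)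
    (hw : w = if Even (∑ i, round (x i)) then fun i => round (x i) else g) :
    Even (∑ i, w i) ∧
      ∀ z : Fin n → ℤ, Even (∑ i, z i) →
        ∑ i, (x i - (w i : ℝ)) ^ 2 ≤ ∑ i, (x i - (z i : ℝ)) ^ 2 := by
  by_cases hE : Even (∑ i, round (x i))
  · rw [hw, if_pos hE]
    exact ⟨hE, fun z _ => sum_sq_sub_round_le x z⟩
  rw [hw, if_neg hE]
  have hgstar : g istar = flipRound (x istar) := hgstar
  have h_even : Even (∑ i, g i) := by
    have h_odd := sum_sub_sum_eq_of_eq_of_ne hg ▸ hgstar ▸ odd_flipRound_sub_round (x istar)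
    simpa using (Int.not_even_iff_odd.mp hE).add_odd h_odd
  have h_cost : ∑ i, (x i - (g i : ℝ)) ^ 2
      = ∑ i, (x i - round (x i)) ^ 2 + (1 - 2 * |x istar - round (x istar)|) := by
    have := sum_sub_sum_eq_of_eq_of_ne (f := fun i => (x i - (g i : ℝ)) ^ 2)
      (g := fun i => (x i - round (x i)) ^ 2) fun i hi => by rw [hg i hi]
    rw [hgstar, sq_sub_flipRound] at this
    linarith
  refine ⟨h_even, fun z hz => h_cost ▸ sum_sq_sub_round_add_le_of_ne x (fun i => ?_) ?_⟩
  · rcases eq_or_ne i istar with rfl | hi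
    exacts [le_rfl, (hmax i hi).le]
  · rintro rfl
    exact hE hz

/-- Correctness of the `D_n` nearest-point rule for generic points: if no coordinate of `x`
is at a half-integer tie and the coordinate furthest from an integer is unique, then the
nearest point of `D_n = {z ∈ ℤⁿ : Σ zᵢ even}` to `x` is whichever of `f x` (componentwise
rounding) and `g` (flip the rounding of the furthest coordinate) has even coordinate sum. -/
theorem dn_nearest_point_rule {n : ℕ} (x : Fin n → ℝ) (istar : Fin n)
    (hties : ∀ i, |x i - round (x i)| < 1 / 2)
    (hmax : ∀ i, i ≠ istar → |x i - round (x i)| < |x istar - round (x istar)|)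
    (g : Fin n → ℤ)
    (hg : ∀ i, i ≠ istar → g i = round (x i))
    (hgstar : g istar =
      if (round (x istar) : ℝ) ≤ x istar then round (x istar) + 1 else round (x istar) - 1)
    (w : Fin n → ℤ)
    (hw : w = if Even (∑ i, round (x i)) then fun i => round (x i) else g) :
    Even (∑ i, w i) ∧
      ∀ z : Fin n → ℤ, Even (∑ i, z i) →
        ∑ i, (x i - (w i : ℝ)) ^ 2 ≤ ∑ i, (x i - (z i : ℝ)) ^ 2 :=
  dn_nearest_point_rule_general x istar hmax g hg hgstar w hw
end
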